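/- arXiv:1911.07189 — 3 statements merged into one kernel-verified Lean document; each statement's English description precedes it below -/
import Mathlib

section
/- Let p ≡ 7 (mod 8) be a prime, let √2 denote a square root of 2 in Z_{p²}, and set θ = 1 + √2. If the image of θ generates the quotient of the unit group U(p²) of Z_{p²} by {1,−1} (equivalently, every unit of Z_{p²} equals ±θ^i for some i), then there exists a PPS(Z_{p²}, {0, 1, −1, p, −p}, {0, θ−1, −(θ−1), p(θ−1), −p(θ−1)}). -/
open scoped Classical

/-- `IsPPS A₁ A₂ S`: `S` is a partial partitionable set for the subsets `A₁`, `A₂`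
of the abelian group `G`: the multiset of the four elements `x, -x, y, -y` over all
pairs `(x,y) ∈ S` covers each element of `G \ A₁` exactly once (and elements of `A₁`
zero times), and the multiset of the four elements `x+y, -(x+y), x-y, -(x-y)` covers
each element of `G \ A₂` exactly once (and elements of `A₂` zero times). -/
def IsPPS {G : Type*} [AddCommGroup G] (A₁ A₂ : Set G) (S : Finset (G × G)) : Prop :=
  (∀ z : G, (S.val.bind fun p => ({p.1, -p.1, p.2, -p.2} : Multiset G)).count z
      = if z ∈ A₁ then 0 else 1) ∧
  (∀ z : G, (S.val.bind fun p =>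
      ({p.1 + p.2, -(p.1 + p.2), p.1 - p.2, -(p.1 - p.2)} : Multiset G)).count z
      = if z ∈ A₂ then 0 else 1)

/-- An almost partitionable set `APS(v, α, β)`. -/
def IsAPS (v : ℕ) (α β : ZMod v) (S : Finset (ZMod v × ZMod v)) : Prop :=
  IsPPS ({0, α, -α} : Set (ZMod v)) ({0, β, -β} : Set (ZMod v)) S

/-- A partitionable set `PS(v)`. -/
def IsPS (v : ℕ) (S : Finset (ZMod v × ZMod v)) : Prop :=
  IsPPS ({0} : Set (ZMod v)) ({0} : Set (ZMod v)) S

/-!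
Put `θ = 1 + r`. Every unit of `ℤ/p²` is `±θ^j` with `j < m = p(p-1)/2`, and reducing modulo
`p` shows that every nonzero non-unit is `±pθ^j` with `j < n = (p-1)/2`; as `p ≡ 3 (mod 4)`,
both `m` and `n` are odd. Hence the pairs `(θ^(2i+1), θ^(2i+2))`, `i < (m-1)/2`, and
`(pθ^(2i+1), pθ^(2i+2))`, `i < (n-1)/2`, cover every element outside `{0, ±1, ±p}` exactly once
by `x, -x, y, -y`. Each pair has `y = θx`, and `r² = 2` gives `x + y = r·y` and `x - y = r·(-x)`,
so the second list is `r` times the first one and covers every element outside `r·{0, ±1, ±p}`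
exactly once.
-/

open Multiset

lemma Multiset.nodup_of_nodup_bind {α β : Type*} {s : Multiset α} {f : α → Multiset β}
    (h : (s.bind f).Nodup) (hf : ∀ a ∈ s, f a ≠ 0) : s.Nodup := by
  obtain ⟨-, l, rfl, hl⟩ := nodup_bind.1 h
  refine List.Pairwise.imp_of_mem (fun {a b} ha _ hab hne => ?_) hl
  subst hne
  obtain ⟨x, hx⟩ := exists_mem_of_ne_zero (hf a ha)
  exact Multiset.disjoint_left.1 hab hx hx

lemma bind_range_two_mul_add_one {α : Type*} (f : ℕ → Multiset α) (K : ℕ) :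
    (range (2 * K + 1)).bind f = f 0 + (range K).bind fun i => f (2 * i + 1) + f (2 * i + 2) := by
  induction K with
  | zero => simp
  | succ K ih =>
    rw [show 2 * (K + 1) + 1 = 2 * K + 1 + 1 + 1 by ring, range_succ, range_succ, cons_bind,
      cons_bind, ih, range_succ, cons_bind]
    abel

lemma count_eq_ite_of_add_eq_univ {α : Type*} [Fintype α] {M A : Multiset α}
    (h : M + A = Finset.univ.val) (z : α) : M.count z = if z ∈ A then 0 else 1 := by
  have hz := congrArg (count z) h
  rw [count_add, count_univ] at hz
  split_ifs with hA
  · have := count_pos.2 hA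
    omega
  · rw [count_eq_zero.2 hA] at hz
    omega

section PPS

variable {G : Type*} [AddCommGroup G]

lemma isPPS_toFinset_of_add_eq_univ [Fintype G] {P : Multiset (G × G)} {A₁ A₂ : Multiset G}
    (h₁ : P.bind (fun q => {q.1, -q.1, q.2, -q.2}) + A₁ = Finset.univ.val)
    (h₂ : P.bind (fun q => {q.1 + q.2, -(q.1 + q.2), q.1 - q.2, -(q.1 - q.2)}) + A₂ =
      Finset.univ.val) :
    IsPPS {z | z ∈ A₁} {z | z ∈ A₂} P.toFinset := by
  have hP : P.Nodup :=
    nodup_of_nodup_bind (nodup_of_le (h₁ ▸ le_add_right _ _) Finset.univ.nodup) (by simp)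
  rw [IsPPS, toFinset_val, hP.dedup]
  exact ⟨fun z => by convert count_eq_ite_of_add_eq_univ h₁ z using 2; exact Iff.rfl,
    fun z => by convert count_eq_ite_of_add_eq_univ h₂ z using 2; exact Iff.rfl⟩

lemma bind_map_consecutive_pairs_add (f : ℕ → G) (K : ℕ) :
    ((range K).map fun i => (f (2 * i + 1), f (2 * i + 2))).bind
        (fun q => ({q.1, -q.1, q.2, -q.2} : Multiset G)) + {f 0, -f 0} =
      (range (2 * K + 1)).bind fun j => {f j, -f j} := by
  rw [bind_range_two_mul_add_one, bind_map, add_comm]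
  simp only [insert_eq_cons, cons_add, singleton_add]

end PPS

lemma map_mul_bind_eq_bind_add_sub {R : Type*} [CommRing R] {r : R} (hr : r ^ 2 = 2)
    (P : Multiset (R × R)) (hP : ∀ q ∈ P, q.2 = (1 + r) * q.1) :
    (P.bind fun q => ({q.1, -q.1, q.2, -q.2} : Multiset R)).map (r * ·) =
      P.bind fun q => {q.1 + q.2, -(q.1 + q.2), q.1 - q.2, -(q.1 - q.2)} := by
  rw [map_bind]
  refine Multiset.bind_congr fun q hq => ?_
  obtain ⟨x, y⟩ := q
  obtain rfl : y = (1 + r) * x := hP _ hq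
  have hadd : x + (1 + r) * x = r * ((1 + r) * x) := by linear_combination (-x) * hr
  have hsub : x - (1 + r) * x = r * -x := by ring
  simp only [hadd, hsub, insert_eq_cons, map_cons, map_singleton, mul_neg, neg_neg]
  simp only [← singleton_add]
  ac_rfl

section SignedPowers

variable {G : Type*} [CommGroup G] [HasDistribNeg G]

lemma pow_card_div_two_eq_one_or_neg_one [Finite G] (hG : (-1 : G) ≠ 1) (u : G) :
    u ^ (Nat.card G / 2) = 1 ∨ u ^ (Nat.card G / 2) = -1 := by
  set H := Subgroup.zpowers (-1 : G)
  have hH : Nat.card H = 2 := by rw [Nat.card_zpowers, orderOf_eq_prime neg_one_sq hG]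
  have hindex : H.index = Nat.card G / 2 := by
    have := H.index_mul_card
    rw [hH] at this
    omega
  obtain ⟨k, hk⟩ := mem_powers_iff_mem_zpowers.2 (hindex ▸ H.pow_index_mem u)
  rw [← hk]
  exact neg_one_pow_eq_or G k

lemma pow_eq_or_eq_neg_pow_mod_card_div_two [Finite G] (hG : (-1 : G) ≠ 1) (u : G) (i : ℕ) :
    u ^ i = u ^ (i % (Nat.card G / 2)) ∨ u ^ i = -u ^ (i % (Nat.card G / 2)) := by
  set m := Nat.card G / 2
  have hi : u ^ i = (u ^ m) ^ (i / m) * u ^ (i % m) := by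
    rw [← pow_mul, ← pow_add, Nat.div_add_mod]
  rcases pow_card_div_two_eq_one_or_neg_one hG u with h | h <;> rw [hi, h]
  · simp
  · rcases neg_one_pow_eq_or G (i / m) with h' | h' <;> simp [h']

-- `univ` is contained in the left side, which has at most `Nat.card G` elements.
lemma bind_range_pm_pow_eq_univ [Fintype G] (hG : (-1 : G) ≠ 1) (u : G)
    (hu : ∀ x : G, ∃ i : ℕ, x = u ^ i ∨ x = -u ^ i) :
    (range (Nat.card G / 2)).bind (fun j => {u ^ j, -u ^ j}) = Finset.univ.val := by
  have hpos : 0 < Nat.card G / 2 := by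
    have : Nontrivial G := ⟨⟨-1, 1, hG⟩⟩
    have := Finite.one_lt_card (α := G)
    omega
  symm
  refine eq_of_le_of_card_le ((le_iff_subset Finset.univ.nodup).2 fun x _ => ?_) ?_
  · obtain ⟨i, hi⟩ := hu x
    refine mem_bind.2 ⟨i % (Nat.card G / 2), mem_range.2 (Nat.mod_lt _ hpos), ?_⟩
    rcases pow_eq_or_eq_neg_pow_mod_card_div_two hG u i with h | h <;>
      rcases hi with rfl | rfl <;> simp [h]
  · rw [Finset.card_val, Finset.card_univ, ← Nat.card_eq_fintype_card, card_bind]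
    simp only [Function.comp_def, insert_eq_cons, card_cons, card_singleton, map_const',
      card_range, sum_replicate, smul_eq_mul]
    omega

end SignedPowers

lemma bind_range_pm_pow_eq_filter_isUnit {R : Type*} [CommRing R] [Fintype R]
    [DecidablePred (IsUnit : R → Prop)] (hR : (-1 : R) ≠ 1)
    {θ : R} (hθ : IsUnit θ) (hgen : ∀ x : R, IsUnit x → ∃ i : ℕ, x = θ ^ i ∨ x = -θ ^ i) :
    (range (Nat.card Rˣ / 2)).bind (fun j => {θ ^ j, -θ ^ j}) =
      Finset.univ.val.filter IsUnit := by
  have hR' : (-1 : Rˣ) ≠ 1 := fun h => hR (by simpa using congrArg Units.val h)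
  have hu (x : Rˣ) : ∃ i : ℕ, x = hθ.unit ^ i ∨ x = -hθ.unit ^ i := by
    obtain ⟨i, hi⟩ := hgen x x.isUnit
    exact ⟨i, by simpa [Units.ext_iff] using hi⟩
  have hunits : Finset.univ.val.filter IsUnit = Finset.univ.val.map (Units.val : Rˣ → R) := by
    have : (Finset.univ.filter IsUnit : Finset R) =
        Finset.univ.map ⟨Units.val, Units.val_injective⟩ := by
      ext x
      simp [IsUnit, eq_comm]
    simpa using congrArg Finset.val this
  rw [hunits, ← bind_range_pm_pow_eq_univ hR' _ hu, Multiset.map_bind]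
  simp

lemma exists_pow_or_neg_pow_of_surjective_unitsMap {R S : Type*} [Ring R] [Ring S]
    (f : R →+* S) (hf : Function.Surjective (Units.map (f : R →* S))) {θ : R}
    (hgen : ∀ x : R, IsUnit x → ∃ i : ℕ, x = θ ^ i ∨ x = -θ ^ i) (y : S) (hy : IsUnit y) :
    ∃ i : ℕ, y = f θ ^ i ∨ y = -f θ ^ i := by
  obtain ⟨v, rfl⟩ := hy
  obtain ⟨x, rfl⟩ := hf v
  obtain ⟨i, hi | hi⟩ := hgen x x.isUnit <;> exact ⟨i, by simp [hi]⟩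

lemma odd_totient_prime_pow_div_two {p : ℕ} (hp : p.Prime) (hp4 : p % 4 = 3) {k : ℕ}
    (hk : k ≠ 0) :
    Odd (Nat.totient (p ^ k) / 2) := by
  rw [Nat.totient_prime_pow hp (Nat.pos_of_ne_zero hk), Nat.mul_div_assoc _ (by omega)]
  exact (hp.odd_of_ne_two (by omega)).pow.mul (Nat.odd_iff.2 (by omega))

namespace ZMod

variable {p : ℕ} [Fact p.Prime]

lemma natCast_mul_val_castHom (x : ZMod (p ^ 2)) :
    (p : ZMod (p ^ 2)) * ((castHom (dvd_pow_self p two_ne_zero) (ZMod p) x).val : ZMod (p ^ 2)) =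
      p * x := by
  rw [castHom_apply, cast_eq_val, val_natCast]
  conv_rhs => rw [← natCast_zmod_val x, ← Nat.mod_add_div x.val p]
  rw [Nat.cast_add, Nat.cast_mul, mul_add, ← mul_assoc, ← sq, ← Nat.cast_pow, natCast_self,
    zero_mul, add_zero]

lemma filter_not_isUnit_univ_val_prime_sq :
    (Finset.univ.val : Multiset (ZMod (p ^ 2))).filter (¬IsUnit ·) =
      (Finset.univ.val : Multiset (ZMod p)).map fun y => (p : ZMod (p ^ 2)) * y.val := by
  have hp := (Fact.out : p.Prime)
  have hinj : Function.Injective fun y : ZMod p => (p : ZMod (p ^ 2)) * y.val := by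
    intro a b hab
    have hlt (y : ZMod p) : p * y.val < p ^ 2 := by
      rw [sq]; exact Nat.mul_lt_mul_of_pos_left (val_lt y) hp.pos
    have := congrArg val hab
    simp only [← Nat.cast_mul, val_cast_of_lt (hlt _)] at this
    exact val_injective p (Nat.eq_of_mul_eq_mul_left hp.pos this)
  refine (Nodup.ext (Finset.univ.nodup.filter _) (Finset.univ.nodup.map hinj)).2 fun x => ?_
  simp only [mem_filter, Finset.mem_val, Finset.mem_univ, true_and, mem_map]
  constructor
  · intro hx
    have hdvd : p ∣ x.val := by
      rwa [← natCast_zmod_val x, isUnit_natCast_iff_not_dvd_pow hp two_pos, not_not] at hx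
    refine ⟨castHom (dvd_pow_self p two_ne_zero) (ZMod p) (x.val / p : ℕ), ?_⟩
    rw [natCast_mul_val_castHom, ← Nat.cast_mul, Nat.mul_div_cancel' hdvd, natCast_zmod_val]
  · rintro ⟨y, rfl⟩ h
    exact prime_natCast_not_isUnit_pow hp two_pos (isUnit_of_mul_isUnit_left h)

lemma univ_val_prime_sq_eq (hp2 : p ≠ 2) {θ : ZMod (p ^ 2)} (hθ : IsUnit θ)
    (hgen : ∀ x : ZMod (p ^ 2), IsUnit x → ∃ i : ℕ, x = θ ^ i ∨ x = -θ ^ i) :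
    (Finset.univ.val : Multiset (ZMod (p ^ 2))) =
      (range (Nat.card (ZMod (p ^ 2))ˣ / 2)).bind (fun j => {θ ^ j, -θ ^ j}) +
        ((range (Nat.card (ZMod p)ˣ / 2)).bind
          (fun j => {(p : ZMod (p ^ 2)) * θ ^ j, -((p : ZMod (p ^ 2)) * θ ^ j)}) + {0}) := by
  have hp := (Fact.out : p.Prime)
  have : Fact (2 < p) := ⟨hp.two_le.lt_of_ne' hp2⟩
  have : Fact (2 < p ^ 2) := ⟨by nlinarith [hp.two_le]⟩
  set ψ := castHom (dvd_pow_self p two_ne_zero) (ZMod p)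
  have hψ : (Finset.univ.val : Multiset (ZMod p)) =
      (range (Nat.card (ZMod p)ˣ / 2)).bind (fun j => {ψ θ ^ j, -ψ θ ^ j}) + {0} := by
    have hzero : (Finset.univ.val : Multiset (ZMod p)).filter (¬IsUnit ·) = {0} :=
      (Nodup.ext (Finset.univ.nodup.filter _) (nodup_singleton 0)).2 fun x => by simp
    rw [← hzero, bind_range_pm_pow_eq_filter_isUnit neg_one_ne_one (hθ.map ψ)
      (exists_pow_or_neg_pow_of_surjective_unitsMap ψ (unitsMap_surjective _) hgen),
      filter_add_not]
  rw [bind_range_pm_pow_eq_filter_isUnit neg_one_ne_one hθ hgen]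
  conv_lhs => rw [← filter_add_not IsUnit Finset.univ.val]
  rw [filter_not_isUnit_univ_val_prime_sq, hψ]
  congr 1
  rw [Multiset.map_add, Multiset.map_bind]
  simp only [insert_eq_cons, map_cons, map_singleton, ← map_pow, ← map_neg, ψ,
    natCast_mul_val_castHom, mul_neg, val_zero, Nat.cast_zero, mul_zero]

end ZMod

theorem stmt16 (p : ℕ) (hp : Nat.Prime p) (hp8 : p % 8 = 7)
    (r : ZMod (p ^ 2)) (hr : r ^ 2 = 2)
    (hgen : ∀ x : ZMod (p ^ 2), IsUnit x →
      ∃ i : ℕ, x = (1 + r) ^ i ∨ x = -((1 + r) ^ i)) :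
    ∃ S : Finset (ZMod (p ^ 2) × ZMod (p ^ 2)),
      IsPPS ({0, 1, -1, (p : ZMod (p ^ 2)), -(p : ZMod (p ^ 2))} : Set (ZMod (p ^ 2)))
            ({0, (1 + r) - 1, -((1 + r) - 1), (p : ZMod (p ^ 2)) * ((1 + r) - 1),
              -((p : ZMod (p ^ 2)) * ((1 + r) - 1))} : Set (ZMod (p ^ 2))) S := by
  have := Fact.mk hp
  have hθ : IsUnit (1 + r) := IsUnit.of_mul_eq_one (r - 1) (by linear_combination hr)
  have h2 : IsUnit (2 : ZMod (p ^ 2)) := by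
    exact_mod_cast (ZMod.isUnit_natCast_iff_not_dvd_pow hp two_pos).2 fun h =>
      absurd (Nat.le_of_dvd two_pos h) (by omega)
  have hr' : IsUnit r := (isUnit_pow_iff two_ne_zero).1 (hr ▸ h2)
  obtain ⟨K, hK⟩ : Odd (Nat.card (ZMod (p ^ 2))ˣ / 2) := by
    rw [Nat.card_eq_fintype_card, ZMod.card_units_eq_totient]
    exact odd_totient_prime_pow_div_two hp (by omega) two_ne_zero
  obtain ⟨K', hK'⟩ : Odd (Nat.card (ZMod p)ˣ / 2) := by
    rw [Nat.card_eq_fintype_card, ZMod.card_units_eq_totient]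
    simpa using odd_totient_prime_pow_div_two hp (by omega) one_ne_zero
  set A : Multiset (ZMod (p ^ 2)) := {0, 1, -1, (p : ZMod (p ^ 2)), -(p : ZMod (p ^ 2))}
  set P : Multiset (ZMod (p ^ 2) × ZMod (p ^ 2)) :=
    (range K).map (fun i => ((1 + r) ^ (2 * i + 1), (1 + r) ^ (2 * i + 2))) +
      (range K').map fun i =>
        ((p : ZMod (p ^ 2)) * (1 + r) ^ (2 * i + 1), p * (1 + r) ^ (2 * i + 2))
  have hP : ∀ q ∈ P, q.2 = (1 + r) * q.1 := by
    simp only [P, mem_add, mem_map, mem_range]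
    rintro q (⟨i, -, rfl⟩ | ⟨i, -, rfl⟩) <;> ring
  have h₁ : P.bind (fun q => {q.1, -q.1, q.2, -q.2}) + A = Finset.univ.val := by
    rw [ZMod.univ_val_prime_sq_eq (by omega) hθ hgen, hK, hK', ← bind_map_consecutive_pairs_add,
      ← bind_map_consecutive_pairs_add, add_bind]
    simp only [A, pow_zero, mul_one, insert_eq_cons, ← singleton_add]
    ac_rfl
  have h₂ : P.bind (fun q => {q.1 + q.2, -(q.1 + q.2), q.1 - q.2, -(q.1 - q.2)}) +
      A.map (r * ·) = Finset.univ.val := by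
    rw [← map_mul_bind_eq_bind_add_sub hr P hP, ← Multiset.map_add, h₁]
    exact map_univ_val_equiv (Units.mulLeft hr'.unit)
  refine ⟨P.toFinset, ?_⟩
  convert isPPS_toFinset_of_add_eq_univ h₁ h₂ using 1 <;> ext z <;> simp [A, mul_comm]
end

section
/- Let v be a positive integer with gcd(v,6) = 1. If there exists a PS(v), or there exist nonzero α, β ∈ Z_v and an APS(v,α,β), then there exists a maximum (3v,4,1)-optical orthogonal code. -/
open scoped Classical

/-- The multiset of differences `x - y` over all ordered pairs of distinct elements
of the codeword `b`. -/
def codewordDiffs {n : ℕ} (b : Finset (ZMod n)) : Multiset (ZMod n) :=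
  ((b ×ˢ b).filter fun p => p.1 ≠ p.2).val.map fun p => p.1 - p.2

/-- The multiset of differences of a family of codewords. -/
def OOCDiffs {n : ℕ} (B : Finset (Finset (ZMod n))) : Multiset (ZMod n) :=
  B.val.bind codewordDiffs

/-- `B` is a `(n, k, 1)`-optical orthogonal code: a set of `k`-subsets of `ZMod n`
whose multiset of differences contains no repeated element. -/
def IsOOC (n k : ℕ) (B : Finset (Finset (ZMod n))) : Prop :=
  (∀ b ∈ B, b.card = k) ∧ (OOCDiffs B).Nodup

/-- The leave of an optical orthogonal code: the set of missing differences. -/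
def OOCLeave {n : ℕ} (B : Finset (Finset (ZMod n))) : Set (ZMod n) :=
  {z : ZMod n | z ∉ OOCDiffs B}

/-- A maximum `(n, k, 1)`-optical orthogonal code: the leave has size at most `k * (k - 1)`. -/
def IsMaximumOOC (n k : ℕ) (B : Finset (Finset (ZMod n))) : Prop :=
  IsOOC n k B ∧ (OOCLeave B).ncard ≤ k * (k - 1)

/-!
Identify `ZMod (3 * v)` with `ZMod 3 × ZMod v` by the Chinese remainder theorem. A pair `(x, y)`
of the (almost) partitionable set gives the codeword `{(0, 0), (0, x + y), (1, x), (1, y)}`, whose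
twelve differences are `(0, ±(x + y))`, `(0, ±(x - y))` and `(i, ±x)`, `(i, ±y)` for `i = 1, 2`.
The two covering conditions say exactly that all these differences are distinct and that they miss
only `{0} × {0, ±β}` and `{1, 2} × {0, ±α}`: at most `9 ≤ 4 · 3` elements.
-/

namespace Multiset

variable {α : Type*} {m : Multiset α} {A : Set α}

theorem nodup_of_count_eq_ite (h : ∀ z, m.count z = if z ∈ A then 0 else 1) : m.Nodup :=
  nodup_iff_count_le_one.2 fun z => by rw [h]; split_ifs <;> omega

theorem mem_iff_notMem_of_count_eq_ite (h : ∀ z, m.count z = if z ∈ A then 0 else 1) (z : α) :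
    z ∈ m ↔ z ∉ A := by
  rw [← count_pos, h]
  split_ifs <;> simp [*]

end Multiset

section PartialPartitionableSet

variable {G : Type*} [AddCommGroup G]

def pairPoints (p : G × G) : Multiset G := {p.1, -p.1, p.2, -p.2}

def pairSumsDiffs (p : G × G) : Multiset G :=
  {p.1 + p.2, -(p.1 + p.2), p.1 - p.2, -(p.1 - p.2)}

namespace IsPPS

variable {A₁ A₂ : Set G} {S : Finset (G × G)}

theorem nodup_points (hS : IsPPS A₁ A₂ S) : (S.val.bind pairPoints).Nodup :=
  Multiset.nodup_of_count_eq_ite hS.1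

theorem nodup_sumsDiffs (hS : IsPPS A₁ A₂ S) : (S.val.bind pairSumsDiffs).Nodup :=
  Multiset.nodup_of_count_eq_ite hS.2

theorem mem_points_iff (hS : IsPPS A₁ A₂ S) (z : G) : z ∈ S.val.bind pairPoints ↔ z ∉ A₁ :=
  Multiset.mem_iff_notMem_of_count_eq_ite hS.1 z

theorem mem_sumsDiffs_iff (hS : IsPPS A₁ A₂ S) (z : G) :
    z ∈ S.val.bind pairSumsDiffs ↔ z ∉ A₂ :=
  Multiset.mem_iff_notMem_of_count_eq_ite hS.2 z

theorem add_ne_zero_and_sub_ne_zero (hS : IsPPS A₁ A₂ S) (h0 : (0 : G) ∈ A₂) {p : G × G}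
    (hp : p ∈ S) : p.1 + p.2 ≠ 0 ∧ p.1 - p.2 ≠ 0 := by
  have hne : ∀ z ∈ pairSumsDiffs p, z ≠ 0 := fun z hz hz0 =>
    (hS.mem_sumsDiffs_iff z).1 (Multiset.mem_bind.2 ⟨p, hp, hz⟩) (hz0 ▸ h0)
  exact ⟨hne _ (by simp [pairSumsDiffs]), hne _ (by simp [pairSumsDiffs])⟩

end IsPPS

end PartialPartitionableSet

theorem ZMod.three_cases (i : ZMod 3) : i = 0 ∨ i = 1 ∨ i = 2 := by
  revert i; decide

section TripleLayer

variable {α : Type*}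

def tripleLayer (Q P : Multiset α) : Multiset (ZMod 3 × α) :=
  Q.map (Prod.mk 0) + P.map (Prod.mk 1) + P.map (Prod.mk 2)

theorem bind_tripleLayer {ι : Type*} (s : Multiset ι) (Q P : ι → Multiset α) :
    (s.bind fun i => tripleLayer (Q i) (P i)) = tripleLayer (s.bind Q) (s.bind P) := by
  simp only [tripleLayer, Multiset.bind_add, Multiset.map_bind]

theorem mem_tripleLayer {Q P : Multiset α} {c : ZMod 3 × α} :
    c ∈ tripleLayer Q P ↔ if c.1 = 0 then c.2 ∈ Q else c.2 ∈ P := by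
  obtain ⟨i, z⟩ := c
  have h10 : (1 : ZMod 3) ≠ 0 := by decide
  have h20 : (2 : ZMod 3) ≠ 0 := by decide
  have h21 : (2 : ZMod 3) ≠ 1 := by decide
  rcases ZMod.three_cases i with rfl | rfl | rfl <;>
    simp [tripleLayer, Prod.ext_iff, h10, h20, h21, h10.symm, h20.symm, h21.symm]

theorem nodup_tripleLayer {Q P : Multiset α} (hQ : Q.Nodup) (hP : P.Nodup) :
    (tripleLayer Q P).Nodup := by
  refine Multiset.nodup_add.2 ⟨Multiset.nodup_add.2 ⟨hQ.map (Prod.mk_right_injective 0),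
    hP.map (Prod.mk_right_injective 1), ?_⟩, hP.map (Prod.mk_right_injective 2), ?_⟩
  · simp [Multiset.disjoint_map_map]
  · have h02 : (0 : ZMod 3) ≠ 2 := by decide
    have h12 : (1 : ZMod 3) ≠ 2 := by decide
    simp [Multiset.disjoint_add_left, Multiset.disjoint_map_map, h02, h12]

end TripleLayer

section Codewords

variable {n : ℕ}

theorem codewordDiffs_four {a₀ a₁ a₂ a₃ : ZMod n} (h₀₁ : a₀ ≠ a₁) (h₀₂ : a₀ ≠ a₂)
    (h₀₃ : a₀ ≠ a₃) (h₁₂ : a₁ ≠ a₂) (h₁₃ : a₁ ≠ a₃) (h₂₃ : a₂ ≠ a₃) :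
    codewordDiffs ({a₀, a₁, a₂, a₃} : Finset (ZMod n)) =
      {a₀ - a₁, a₀ - a₂, a₀ - a₃, a₁ - a₀, a₁ - a₂, a₁ - a₃,
       a₂ - a₀, a₂ - a₁, a₂ - a₃, a₃ - a₀, a₃ - a₁, a₃ - a₂} := by
  have hval : ({a₀, a₁, a₂, a₃} : Finset (ZMod n)).val = a₀ ::ₘ a₁ ::ₘ a₂ ::ₘ {a₃} := by
    rw [Finset.insert_val_of_notMem (by simp [h₀₁, h₀₂, h₀₃]),
      Finset.insert_val_of_notMem (by simp [h₁₂, h₁₃]),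
      Finset.insert_val_of_notMem (by simp [h₂₃])]
    rfl
  rw [codewordDiffs, Finset.filter_val, Finset.product_val, hval]
  simp [Multiset.filter_singleton, h₀₁, h₀₂, h₀₃, h₁₂, h₁₃, h₂₃,
    h₀₁.symm, h₀₂.symm, h₀₃.symm, h₁₂.symm, h₁₃.symm, h₂₃.symm]
  refine Multiset.ext.2 fun a => ?_
  simp only [Multiset.count_cons, Multiset.count_singleton]
  ring

theorem OOCDiffs_image_le {ι : Type*} (f : ι → Finset (ZMod n)) (S : Finset ι) :
    OOCDiffs (S.image f) ≤ S.val.bind fun i => codewordDiffs (f i) := by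
  obtain ⟨u, hu⟩ := Multiset.le_iff_exists_add.1 (Multiset.dedup_le (S.val.map f))
  rw [OOCDiffs, Finset.image_val, ← Multiset.bind_map S.val codewordDiffs f]
  conv_rhs => rw [hu, Multiset.add_bind]
  exact Multiset.le_add_right _ _

theorem mem_OOCDiffs_image {ι : Type*} (f : ι → Finset (ZMod n)) (S : Finset ι) (w : ZMod n) :
    w ∈ OOCDiffs (S.image f) ↔ w ∈ S.val.bind fun i => codewordDiffs (f i) := by
  simp [OOCDiffs, Multiset.mem_bind]

end Codewords

section Construction

variable {G : Type*} [AddCommGroup G] {n : ℕ} (φ : ZMod 3 × G ≃+ ZMod n)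

def oocBlock (p : G × G) : Finset (ZMod n) :=
  {φ (0, 0), φ (0, p.1 + p.2), φ (1, p.1), φ (1, p.2)}

section Block

variable {p : G × G}

theorem oocBlock_pairwise_ne (hs : p.1 + p.2 ≠ 0) (hd : p.1 - p.2 ≠ 0) :
    φ (0, 0) ≠ φ (0, p.1 + p.2) ∧ φ (0, 0) ≠ φ (1, p.1) ∧ φ (0, 0) ≠ φ (1, p.2) ∧
      φ (0, p.1 + p.2) ≠ φ (1, p.1) ∧ φ (0, p.1 + p.2) ≠ φ (1, p.2) ∧
      φ (1, p.1) ≠ φ (1, p.2) := by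
  have h01 : (0 : ZMod 3) ≠ 1 := by decide
  simp only [ne_eq, φ.injective.eq_iff, Prod.mk.injEq, h01, false_and, not_false_eq_true,
    true_and]
  exact ⟨Ne.symm hs, sub_ne_zero.1 hd⟩

theorem card_oocBlock (hs : p.1 + p.2 ≠ 0) (hd : p.1 - p.2 ≠ 0) : (oocBlock φ p).card = 4 := by
  obtain ⟨h₀₁, h₀₂, h₀₃, h₁₂, h₁₃, h₂₃⟩ := oocBlock_pairwise_ne φ hs hd
  exact Finset.card_eq_four.2 ⟨_, _, _, _, h₀₁, h₀₂, h₀₃, h₁₂, h₁₃, h₂₃, rfl⟩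

theorem codewordDiffs_oocBlock (hs : p.1 + p.2 ≠ 0) (hd : p.1 - p.2 ≠ 0) :
    codewordDiffs (oocBlock φ p) = (tripleLayer (pairSumsDiffs p) (pairPoints p)).map φ := by
  obtain ⟨h₀₁, h₀₂, h₀₃, h₁₂, h₁₃, h₂₃⟩ := oocBlock_pairwise_ne φ hs hd
  obtain ⟨x, y⟩ := p
  have h02 : (0 : ZMod 3) - 1 = 2 := by decide
  rw [oocBlock, codewordDiffs_four h₀₁ h₀₂ h₀₃ h₁₂ h₁₃ h₂₃]
  simp only [← map_sub, Prod.mk_sub_mk, sub_self, sub_zero, zero_sub, h02,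
    show x + y - x = y by abel, show x + y - y = x by abel, show x - (x + y) = -y by abel,
    show y - (x + y) = -x by abel, show y - x = -(x - y) by abel, tripleLayer, pairSumsDiffs,
    pairPoints, Multiset.insert_eq_cons, Multiset.map_add, Multiset.map_cons,
    Multiset.map_singleton]
  refine Multiset.ext.2 fun a => ?_
  simp only [Multiset.count_add, Multiset.count_cons, Multiset.count_singleton]
  ring

end Block

variable {A₁ A₂ : Set G} {S : Finset (G × G)}

namespace IsPPS

theorem bind_codewordDiffs_oocBlock (hS : IsPPS A₁ A₂ S) (h0 : (0 : G) ∈ A₂) :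
    (S.val.bind fun p => codewordDiffs (oocBlock φ p)) =
      (tripleLayer (S.val.bind pairSumsDiffs) (S.val.bind pairPoints)).map φ := by
  rw [← bind_tripleLayer, Multiset.map_bind]
  refine Multiset.bind_congr fun p hp => ?_
  obtain ⟨hs, hd⟩ := hS.add_ne_zero_and_sub_ne_zero h0 hp
  exact codewordDiffs_oocBlock φ hs hd

theorem isOOC_image_oocBlock (hS : IsPPS A₁ A₂ S) (h0 : (0 : G) ∈ A₂) :
    IsOOC n 4 (S.image (oocBlock φ)) := by
  refine ⟨Finset.forall_mem_image.2 fun p hp => ?_,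
    Multiset.nodup_of_le (OOCDiffs_image_le _ S) ?_⟩
  · obtain ⟨hs, hd⟩ := hS.add_ne_zero_and_sub_ne_zero h0 hp
    exact card_oocBlock φ hs hd
  · rw [hS.bind_codewordDiffs_oocBlock φ h0]
    exact (nodup_tripleLayer hS.nodup_sumsDiffs hS.nodup_points).map φ.injective

theorem oocLeave_image_oocBlock (hS : IsPPS A₁ A₂ S) (h0 : (0 : G) ∈ A₂) :
    OOCLeave (S.image (oocBlock φ)) = φ '' ({0} ×ˢ A₂ ∪ {1, 2} ×ˢ A₁) := by
  ext w
  obtain ⟨⟨i, z⟩, rfl⟩ := φ.surjective w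
  rw [OOCLeave, Set.mem_ofPred_eq, mem_OOCDiffs_image, hS.bind_codewordDiffs_oocBlock φ h0,
    Multiset.mem_map_of_injective φ.injective, φ.injective.mem_set_image, mem_tripleLayer,
    hS.mem_sumsDiffs_iff, hS.mem_points_iff]
  have h20 : (2 : ZMod 3) ≠ 0 := by decide
  rcases ZMod.three_cases i with rfl | rfl | rfl <;> simp [h20, h20.symm]

theorem ncard_oocLeave_image_oocBlock_le (hS : IsPPS A₁ A₂ S) (h0 : (0 : G) ∈ A₂) :
    (OOCLeave (S.image (oocBlock φ))).ncard ≤ A₂.ncard + 2 * A₁.ncard := by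
  rw [hS.oocLeave_image_oocBlock φ h0, Set.ncard_image_of_injective _ φ.injective]
  calc _ ≤ ({(0 : ZMod 3)} ×ˢ A₂).ncard + ({1, 2} ×ˢ A₁).ncard := Set.ncard_union_le _ _
    _ = A₂.ncard + 2 * A₁.ncard := by
      rw [Set.ncard_prod, Set.ncard_prod, Set.ncard_singleton, Set.ncard_pair (by decide), one_mul]

end IsPPS

end Construction

theorem Set.ncard_triple_le {α : Type*} (a b c : α) : ({a, b, c} : Set α).ncard ≤ 3 :=
  (Set.ncard_insert_le _ _).trans <| Nat.succ_le_succ <| (Set.ncard_insert_le _ _).trans <| by simp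

theorem IsPPS.exists_isMaximumOOC {v : ℕ} (hco : Nat.Coprime 3 v) {A₁ A₂ : Set (ZMod v)}
    {S : Finset (ZMod v × ZMod v)} (hS : IsPPS A₁ A₂ S) (h0 : (0 : ZMod v) ∈ A₂)
    (h₁ : A₁.ncard ≤ 3) (h₂ : A₂.ncard ≤ 3) :
    ∃ B : Finset (Finset (ZMod (3 * v))), IsMaximumOOC (3 * v) 4 B := by
  let φ := (ZMod.chineseRemainder hco).symm.toAddEquiv
  exact ⟨S.image (oocBlock φ), hS.isOOC_image_oocBlock φ h0,
    (hS.ncard_oocLeave_image_oocBlock_le φ h0).trans (by omega)⟩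

theorem stmt18 (v : ℕ) (hgcd : Nat.gcd v 6 = 1)
    (h : (∃ S : Finset (ZMod v × ZMod v), IsPS v S) ∨
      (∃ α β : ZMod v, α ≠ 0 ∧ β ≠ 0 ∧
        ∃ S : Finset (ZMod v × ZMod v), IsAPS v α β S)) :
    ∃ B : Finset (Finset (ZMod (3 * v))), IsMaximumOOC (3 * v) 4 B := by
  have hco : Nat.Coprime 3 v := (Nat.Coprime.coprime_dvd_right (by norm_num) hgcd).symm
  rcases h with ⟨S, hS⟩ | ⟨α, β, -, -, S, hS⟩
  · exact IsPPS.exists_isMaximumOOC hco hS rfl (by simp) (by simp)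
  · exact IsPPS.exists_isMaximumOOC hco hS (by simp) (Set.ncard_triple_le _ _ _)
      (Set.ncard_triple_le _ _ _)
end

section
/- Let v be a positive integer with gcd(v,10) = 1. If there exists a PS(v), or there exist nonzero α, β ∈ Z_v and an APS(v,α,β), then there exists a maximum (5v,5,1)-optical orthogonal code. -/
open scoped Classical

/- ### Auxiliary material -/

lemma codewordDiffs_five {n : ℕ} (a b c d e : ZMod n)
    (hab : a ≠ b) (hac : a ≠ c) (had : a ≠ d) (hae : a ≠ e)
    (hbc : b ≠ c) (hbd : b ≠ d) (hbe : b ≠ e)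
    (hcd : c ≠ d) (hce : c ≠ e) (hde : d ≠ e) :
    codewordDiffs {a,b,c,d,e} =
      (a - b) ::ₘ (a - c) ::ₘ (a - d) ::ₘ (a - e) ::ₘ (b - a) ::ₘ (b - c) ::ₘ (b - d) ::ₘ
      (b - e) ::ₘ (c - a) ::ₘ (c - b) ::ₘ (c - d) ::ₘ (c - e) ::ₘ (d - a) ::ₘ (d - b) ::ₘ
      (d - c) ::ₘ (d - e) ::ₘ (e - a) ::ₘ (e - b) ::ₘ (e - c) ::ₘ (e - d) ::ₘ 0 := by
  have h1 : ({a,b,c,d,e} : Finset (ZMod n)).val = {a,b,c,d,e} := by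
    simp [Finset.insert_val_of_notMem, hab, hac, had, hae, hbc, hbd, hbe, hcd, hce, hde]
  unfold codewordDiffs
  rw [Finset.filter_val, Finset.product_val, h1]
  simp only [Multiset.insert_eq_cons, ← Multiset.cons_zero, Multiset.cons_product,
    Multiset.zero_product, Multiset.filter_add, Multiset.filter_map, Multiset.map_add,
    Multiset.filter_cons, Multiset.filter_zero, Multiset.map_zero, Multiset.map_map,
    Function.comp]
  simp only [ne_eq, hab, hac, had, hae, hbc, hbd, hbe, hcd, hce, hde,
    hab.symm, hac.symm, had.symm, hae.symm, hbc.symm, hbd.symm, hbe.symm, hcd.symm, hce.symm,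
    hde.symm, not_false_eq_true, if_true, if_pos, not_true, if_neg, eq_self_iff_true,
    not_not, Multiset.map_cons, Multiset.map_zero, add_zero, zero_add, Multiset.cons_add]

/-- `0` if `P` holds, `1` otherwise (with a fixed choice of decidability). -/
noncomputable def stmt19Ind (P : Prop) : ℕ := if P then 0 else 1

lemma stmt19Ind_le_one (P : Prop) : stmt19Ind P ≤ 1 := by
  unfold stmt19Ind; split <;> omega

lemma stmt19Ind_of_eq_zero {P : Prop} (h : stmt19Ind P = 0) : P := by
  by_contra hc
  unfold stmt19Ind at h
  rw [if_neg hc] at h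
  omega

lemma stmt19Ind_of_pos {P : Prop} (h : P) : stmt19Ind P = 0 := by
  unfold stmt19Ind; rw [if_pos h]

lemma stmt19Ind_eq_ite {P : Prop} [inst : Decidable P] : stmt19Ind P = if P then 0 else 1 := by
  unfold stmt19Ind
  congr

/-- The difference list (in `ZMod 5 × ZMod v` coordinates) of the codeword
`{(0,0),(1,x),(1,-x),(4,y),(4,-y)}`. -/
def stmt19DL {v : ℕ} (x y : ZMod v) : Multiset (ZMod 5 × ZMod v) :=
  (0 - 1, 0 - x) ::ₘ (0 - 1, 0 - -x) ::ₘ (0 - 4, 0 - y) ::ₘ (0 - 4, 0 - -y) ::ₘ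
  (1 - 0, x - 0) ::ₘ (1 - 1, x - -x) ::ₘ (1 - 4, x - y) ::ₘ (1 - 4, x - -y) ::ₘ
  (1 - 0, -x - 0) ::ₘ (1 - 1, -x - x) ::ₘ (1 - 4, -x - y) ::ₘ (1 - 4, -x - -y) ::ₘ
  (4 - 0, y - 0) ::ₘ (4 - 1, y - x) ::ₘ (4 - 1, y - -x) ::ₘ (4 - 4, y - -y) ::ₘ
  (4 - 0, -y - 0) ::ₘ (4 - 1, -y - x) ::ₘ (4 - 1, -y - -x) ::ₘ (4 - 4, -y - y) ::ₘ 0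

lemma stmt19DL_struct {v : ℕ} (x y : ZMod v) :
    stmt19DL x y =
      (({x, -x, y, -y} : Multiset (ZMod v)).map fun t => ((0 : ZMod 5), 2 * t))
      + (({x, -x, y, -y} : Multiset (ZMod v)).map fun t => ((1 : ZMod 5), t))
      + (({x, -x, y, -y} : Multiset (ZMod v)).map fun t => ((4 : ZMod 5), t))
      + (({x + y, -(x + y), x - y, -(x - y)} : Multiset (ZMod v)).map
          fun t => ((2 : ZMod 5), t))
      + (({x + y, -(x + y), x - y, -(x - y)} : Multiset (ZMod v)).map
          fun t => ((3 : ZMod 5), t)) := by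
  unfold stmt19DL
  rw [show (0 : ZMod 5) - 1 = 4 by decide, show (0 : ZMod 5) - 4 = 1 by decide,
    show (1 : ZMod 5) - 0 = 1 by decide, show (1 : ZMod 5) - 1 = 0 by decide,
    show (1 : ZMod 5) - 4 = 2 by decide, show (4 : ZMod 5) - 0 = 4 by decide,
    show (4 : ZMod 5) - 1 = 3 by decide, show (4 : ZMod 5) - 4 = 0 by decide,
    show (0 : ZMod v) - x = -x by ring, show (0 : ZMod v) - -x = x by ring,
    show (0 : ZMod v) - y = -y by ring, show (0 : ZMod v) - -y = y by ring,
    show x - (0 : ZMod v) = x by ring, show x - -x = 2 * x by ring,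
    show x - -y = x + y by ring,
    show -x - (0 : ZMod v) = -x by ring, show -x - x = 2 * -x by ring,
    show -x - y = -(x + y) by ring, show -x - -y = -(x - y) by ring,
    show y - (0 : ZMod v) = y by ring, show y - x = -(x - y) by ring,
    show y - -x = x + y by ring, show y - -y = 2 * y by ring,
    show -y - (0 : ZMod v) = -y by ring, show -y - x = -(x + y) by ring,
    show -y - -x = x - y by ring, show -y - y = 2 * -y by ring]
  simp only [Multiset.insert_eq_cons, Multiset.map_cons, Multiset.map_singleton]
  simp only [← Multiset.singleton_add]
  abel

theorem stmt19 (v : ℕ) (hgcd : Nat.gcd v 10 = 1)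
    (h : (∃ S : Finset (ZMod v × ZMod v), IsPS v S) ∨
      (∃ α β : ZMod v, α ≠ 0 ∧ β ≠ 0 ∧
        ∃ S : Finset (ZMod v × ZMod v), IsAPS v α β S)) :
    ∃ B : Finset (Finset (ZMod (5 * v))), IsMaximumOOC (5 * v) 5 B := by
  -- unify the two hypotheses
  obtain ⟨α, β, S, hS⟩ : ∃ (α β : ZMod v) (S : Finset (ZMod v × ZMod v)),
      IsPPS ({0, α, -α} : Set (ZMod v)) ({0, β, -β} : Set (ZMod v)) S := by
    rcases h with ⟨S, hS⟩ | ⟨α, β, -, -, S, hS⟩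
    · exact ⟨0, 0, S, by simpa [IsPS] using hS⟩
    · exact ⟨α, β, S, hS⟩
  have hv : v ≠ 0 := by rintro rfl; simp [Nat.gcd_zero_left] at hgcd
  have hv10 : Nat.Coprime v 10 := hgcd
  have hco5 : Nat.Coprime 5 v := (Nat.Coprime.coprime_dvd_right (by norm_num) hv10).symm
  have hco2 : Nat.Coprime 2 v := (Nat.Coprime.coprime_dvd_right (by norm_num) hv10).symm
  set ce := ZMod.chineseRemainder hco5 with hce
  set g : ZMod 5 × ZMod v → ZMod (5 * v) := fun w => ce.symm w with hgdef
  have hginj : Function.Injective g := fun w w' hh => ce.symm.injective hh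
  have hgsub : ∀ (i j : ZMod 5) (s t : ZMod v), g (i, s) - g (j, t) = g (i - j, s - t) := by
    intro i j s t
    show ce.symm (i, s) - ce.symm (j, t) = ce.symm ((i, s) - (j, t))
    rw [← map_sub]
  -- 2 is a unit of `ZMod v`
  obtain ⟨u, hu2⟩ : IsUnit (2 : ZMod v) := by
    have := (ZMod.isUnit_iff_coprime 2 v).mpr hco2
    simpa using this
  have hcancel2 : ∀ s : ZMod v, 2 * (↑u⁻¹ * s) = s := by
    intro s; rw [← hu2, ← mul_assoc, Units.mul_inv, one_mul]
  have h2inj : Function.Injective (fun t : ZMod v => 2 * t) := by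
    intro s t hst
    have : (u : ZMod v) * s = (u : ZMod v) * t := by rw [hu2]; exact hst
    exact (Units.mul_right_inj u).mp this
  have h2ne : ∀ t : ZMod v, t ≠ 0 → t ≠ -t := by
    intro t ht hc
    apply ht
    have h0 : 2 * t = 2 * 0 := by
      rw [mul_zero, two_mul]
      nth_rewrite 2 [hc]
      abel
    exact h2inj h0
  -- the two difference lists of the partitionable set
  set L1 : Multiset (ZMod v) := S.val.bind fun p => ({p.1, -p.1, p.2, -p.2} : Multiset (ZMod v))
    with hL1def
  set L2 : Multiset (ZMod v) := S.val.bind fun p =>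
    ({p.1 + p.2, -(p.1 + p.2), p.1 - p.2, -(p.1 - p.2)} : Multiset (ZMod v)) with hL2def
  obtain ⟨hL1c, hL2c⟩ := hS
  have hL1 : ∀ z : ZMod v, L1.count z = stmt19Ind (z ∈ ({0, α, -α} : Set (ZMod v))) := by
    intro z; rw [stmt19Ind_eq_ite]; convert hL1c z using 2
  have hL2 : ∀ z : ZMod v,
      L2.count z = stmt19Ind (z ∈ ({0, β, -β} : Set (ZMod v))) := by
    intro z; rw [stmt19Ind_eq_ite]; convert hL2c z using 2
  have hnotin1 : ∀ t : ZMod v, t ∈ L1 → t ∉ ({0, α, -α} : Set (ZMod v)) := by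
    intro t ht hA
    have hc := hL1 t
    rw [stmt19Ind_of_pos hA] at hc
    exact Multiset.count_eq_zero.mp hc ht
  have hne0 : ∀ p ∈ S, p.1 ≠ 0 ∧ p.2 ≠ 0 := by
    intro p hp
    constructor
    · intro h0
      refine hnotin1 p.1 ?_ (by rw [h0]; exact Set.mem_insert _ _)
      exact Multiset.mem_bind.mpr ⟨p, hp, by simp⟩
    · intro h0
      refine hnotin1 p.2 ?_ (by rw [h0]; exact Set.mem_insert _ _)
      exact Multiset.mem_bind.mpr ⟨p, hp, by simp⟩
  -- the codewords
  set blk : ZMod v × ZMod v → Finset (ZMod (5 * v)) := fun p =>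
    {g (0, 0), g (1, p.1), g (1, -p.1), g (4, p.2), g (4, -p.2)} with hblk
  have hmemblk : ∀ (p : ZMod v × ZMod v) (w : ZMod 5 × ZMod v),
      g w ∈ blk p ↔ w = (0, 0) ∨ w = (1, p.1) ∨ w = (1, -p.1) ∨ w = (4, p.2) ∨ w = (4, -p.2) := by
    intro p w
    simp [hblk, hginj.eq_iff]
  -- distinctness of codeword entries
  have hdist : ∀ p ∈ S,
      g (0, 0) ≠ g (1, p.1) ∧ g (0, 0) ≠ g (1, -p.1) ∧ g (0, 0) ≠ g (4, p.2) ∧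
      g (0, 0) ≠ g (4, -p.2) ∧ g (1, p.1) ≠ g (1, -p.1) ∧ g (1, p.1) ≠ g (4, p.2) ∧
      g (1, p.1) ≠ g (4, -p.2) ∧ g (1, -p.1) ≠ g (4, p.2) ∧ g (1, -p.1) ≠ g (4, -p.2) ∧
      g (4, p.2) ≠ g (4, -p.2) := by
    intro p hp
    obtain ⟨h1, h2⟩ := hne0 p hp
    refine ⟨?_, ?_, ?_, ?_, ?_, ?_, ?_, ?_, ?_, ?_⟩
    · exact fun hh => absurd (congrArg Prod.fst (hginj hh)) (show ¬((0:ZMod 5) = 1) by decide)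
    · exact fun hh => absurd (congrArg Prod.fst (hginj hh)) (show ¬((0:ZMod 5) = 1) by decide)
    · exact fun hh => absurd (congrArg Prod.fst (hginj hh)) (show ¬((0:ZMod 5) = 4) by decide)
    · exact fun hh => absurd (congrArg Prod.fst (hginj hh)) (show ¬((0:ZMod 5) = 4) by decide)
    · exact fun hh => h2ne p.1 h1 (congrArg Prod.snd (hginj hh))
    · exact fun hh => absurd (congrArg Prod.fst (hginj hh)) (show ¬((1:ZMod 5) = 4) by decide)
    · exact fun hh => absurd (congrArg Prod.fst (hginj hh)) (show ¬((1:ZMod 5) = 4) by decide)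
    · exact fun hh => absurd (congrArg Prod.fst (hginj hh)) (show ¬((1:ZMod 5) = 4) by decide)
    · exact fun hh => absurd (congrArg Prod.fst (hginj hh)) (show ¬((1:ZMod 5) = 4) by decide)
    · exact fun hh => h2ne p.2 h2 (congrArg Prod.snd (hginj hh))
  have hcard : ∀ p ∈ S, (blk p).card = 5 := by
    intro p hp
    obtain ⟨d1, d2, d3, d4, d5, d6, d7, d8, d9, d10⟩ := hdist p hp
    show ({g (0,0), g (1,p.1), g (1,-p.1), g (4,p.2), g (4,-p.2)} : Finset (ZMod (5*v))).card = 5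
    rw [Finset.card_insert_of_notMem (by
        simp only [Finset.mem_insert, Finset.mem_singleton, not_or]
        exact ⟨d1, d2, d3, d4⟩),
      Finset.card_insert_of_notMem (by
        simp only [Finset.mem_insert, Finset.mem_singleton, not_or]
        exact ⟨d5, d6, d7⟩),
      Finset.card_insert_of_notMem (by
        simp only [Finset.mem_insert, Finset.mem_singleton, not_or]
        exact ⟨d8, d9⟩),
      Finset.card_insert_of_notMem (by simpa using d10), Finset.card_singleton]
  have hdiffblk : ∀ p ∈ S, codewordDiffs (blk p) = (stmt19DL p.1 p.2).map g := by
    intro p hp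
    obtain ⟨d1, d2, d3, d4, d5, d6, d7, d8, d9, d10⟩ := hdist p hp
    show codewordDiffs {g (0,0), g (1,p.1), g (1,-p.1), g (4,p.2), g (4,-p.2)} = _
    rw [codewordDiffs_five _ _ _ _ _ d1 d2 d3 d4 d5 d6 d7 d8 d9 d10]
    simp only [hgsub]
    simp only [stmt19DL, Multiset.map_cons, Multiset.map_zero]
  -- injectivity of the codeword map
  have hinj2 : ∀ p ∈ S.val, ∀ q ∈ S.val, blk p = blk q → p = q := by
    intro p hp q hq hpq
    by_contra hne
    have hq1 : q.1 = p.1 ∨ q.1 = -p.1 := by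
      have hm : g (1, q.1) ∈ blk p := by
        rw [hpq]
        exact Finset.mem_insert_of_mem (Finset.mem_insert_self _ _)
      rw [hmemblk] at hm
      rcases hm with hm | hm | hm | hm | hm
      · exact absurd (congrArg Prod.fst hm) (show ¬((1:ZMod 5) = 0) by decide)
      · exact Or.inl ((Prod.mk.injEq _ _ _ _).mp hm).2
      · exact Or.inr ((Prod.mk.injEq _ _ _ _).mp hm).2
      · exact absurd (congrArg Prod.fst hm) (show ¬((1:ZMod 5) = 4) by decide)
      · exact absurd (congrArg Prod.fst hm) (show ¬((1:ZMod 5) = 4) by decide)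
    have hq2 : q.2 = p.2 ∨ q.2 = -p.2 := by
      have hm : g (4, q.2) ∈ blk p := by
        rw [hpq]
        exact Finset.mem_insert_of_mem (Finset.mem_insert_of_mem
          (Finset.mem_insert_of_mem (Finset.mem_insert_self _ _)))
      rw [hmemblk] at hm
      rcases hm with hm | hm | hm | hm | hm
      · exact absurd (congrArg Prod.fst hm) (show ¬((4:ZMod 5) = 0) by decide)
      · exact absurd (congrArg Prod.fst hm) (show ¬((4:ZMod 5) = 1) by decide)
      · exact absurd (congrArg Prod.fst hm) (show ¬((4:ZMod 5) = 1) by decide)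
      · exact Or.inl ((Prod.mk.injEq _ _ _ _).mp hm).2
      · exact Or.inr ((Prod.mk.injEq _ _ _ _).mp hm).2
    -- a doubly covered element of `L1`
    obtain ⟨t, ht1, ht2⟩ : ∃ t : ZMod v,
        t ∈ ({p.1, -p.1, p.2, -p.2} : Multiset (ZMod v)) ∧
        t ∈ ({q.1, -q.1, q.2, -q.2} : Multiset (ZMod v)) := by
      have hcomp : p.1 ≠ q.1 ∨ p.2 ≠ q.2 := by
        by_contra hcc
        push_neg at hcc
        exact hne (Prod.ext hcc.1 hcc.2)
      rcases hcomp with hc | hc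
      · rcases hq1 with he | he
        · exact absurd he.symm hc
        · exact ⟨q.1, by rw [he]; simp, by simp⟩
      · rcases hq2 with he | he
        · exact absurd he.symm hc
        · exact ⟨q.2, by rw [he]; simp, by simp⟩
    obtain ⟨T, hT⟩ := Multiset.exists_cons_of_mem hp
    have hqT : q ∈ T := by
      have hq' := hq
      rw [hT] at hq'
      rcases Multiset.mem_cons.mp hq' with hqq | hqq
      · exact absurd hqq.symm hne
      · exact hqq
    obtain ⟨T', hT'⟩ := Multiset.exists_cons_of_mem hqT
    have h2le : 2 ≤ L1.count t := by
      rw [hL1def, hT, hT', Multiset.cons_bind, Multiset.cons_bind, Multiset.count_add,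
        Multiset.count_add]
      have c1 : 1 ≤ Multiset.count t ({p.1, -p.1, p.2, -p.2} : Multiset (ZMod v)) :=
        Multiset.one_le_count_iff_mem.mpr ht1
      have c2 : 1 ≤ Multiset.count t ({q.1, -q.1, q.2, -q.2} : Multiset (ZMod v)) :=
        Multiset.one_le_count_iff_mem.mpr ht2
      omega
    have hle1 : L1.count t ≤ 1 := by
      rw [hL1 t]; exact stmt19Ind_le_one _
    omega
  set B : Finset (Finset (ZMod (5 * v))) := S.image blk with hBdef
  have hBval : B.val = S.val.map blk := by
    rw [hBdef, Finset.image_val, Multiset.dedup_eq_self.mpr]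
    exact Multiset.Nodup.map_on hinj2 S.nodup
  have hOD : OOCDiffs B = Multiset.map g
      ((L1.map fun t => ((0:ZMod 5), 2*t)) + (L1.map fun t => ((1:ZMod 5), t))
        + (L1.map fun t => ((4:ZMod 5), t)) + (L2.map fun t => ((2:ZMod 5), t))
        + (L2.map fun t => ((3:ZMod 5), t))) := by
    show B.val.bind codewordDiffs = _
    rw [hBval, Multiset.bind_map]
    calc (S.val.bind fun p => codewordDiffs (blk p))
        = S.val.bind fun p => (stmt19DL p.1 p.2).map g :=
          Multiset.bind_congr fun p hp => hdiffblk p hp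
      _ = Multiset.map g (S.val.bind fun p => stmt19DL p.1 p.2) :=
          (Multiset.map_bind _ _ _).symm
      _ = Multiset.map g (S.val.bind fun p =>
            (({p.1, -p.1, p.2, -p.2} : Multiset (ZMod v)).map fun t => ((0:ZMod 5), 2*t))
            + (({p.1, -p.1, p.2, -p.2} : Multiset (ZMod v)).map fun t => ((1:ZMod 5), t))
            + (({p.1, -p.1, p.2, -p.2} : Multiset (ZMod v)).map fun t => ((4:ZMod 5), t))
            + (({p.1 + p.2, -(p.1 + p.2), p.1 - p.2, -(p.1 - p.2)} : Multiset (ZMod v)).map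
                fun t => ((2:ZMod 5), t))
            + (({p.1 + p.2, -(p.1 + p.2), p.1 - p.2, -(p.1 - p.2)} : Multiset (ZMod v)).map
                fun t => ((3:ZMod 5), t))) := by
          congr 1
          refine Multiset.bind_congr fun p hp => ?_
          have := stmt19DL_struct p.1 p.2
          simpa using this
      _ = _ := by
          congr 1
          rw [Multiset.bind_add, Multiset.bind_add, Multiset.bind_add, Multiset.bind_add]
          rw [← Multiset.map_bind, ← Multiset.map_bind, ← Multiset.map_bind,
            ← Multiset.map_bind, ← Multiset.map_bind]
  -- counting differences
  have piece : ∀ (L : Multiset (ZMod v)) (i : ZMod 5) (A : Set (ZMod v)),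
      (∀ z, L.count z = stmt19Ind (z ∈ A)) → ∀ w : ZMod 5 × ZMod v,
      (L.map fun t => ((i:ZMod 5), t)).count w
        = if w.1 = i then stmt19Ind (w.2 ∈ A) else 0 := by
    intro L i A hA w
    by_cases hwi : w.1 = i
    · have hw : w = (i, w.2) := by rw [← hwi]
      rw [if_pos hwi]
      conv_lhs => rw [hw]
      have hkey := Multiset.count_map_eq_count' (fun t : ZMod v => ((i : ZMod 5), t)) L
        (fun s t hh => congrArg Prod.snd hh) w.2
      exact hkey.trans (hA w.2)
    · rw [if_neg hwi]
      apply Multiset.count_eq_zero_of_notMem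
      intro hmem
      obtain ⟨t, ht, hte⟩ := Multiset.mem_map.mp hmem
      exact hwi (by rw [← hte])
  have piece0 : ∀ w : ZMod 5 × ZMod v,
      (L1.map fun t => ((0:ZMod 5), 2*t)).count w
        = if w.1 = 0 then stmt19Ind ((↑u⁻¹ * w.2) ∈ ({0, α, -α} : Set (ZMod v)))
          else 0 := by
    intro w
    by_cases hwi : w.1 = (0:ZMod 5)
    · have hw : w = ((0:ZMod 5), 2 * (↑u⁻¹ * w.2)) := by
        rw [hcancel2 w.2, ← hwi]
      rw [if_pos hwi]
      conv_lhs => rw [hw]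
      have hkey := Multiset.count_map_eq_count' (fun t : ZMod v => ((0 : ZMod 5), 2 * t)) L1
        (fun s t hh => h2inj (congrArg Prod.snd hh)) (↑u⁻¹ * w.2)
      exact hkey.trans (hL1 _)
    · rw [if_neg hwi]
      apply Multiset.count_eq_zero_of_notMem
      intro hmem
      obtain ⟨t, ht, hte⟩ := Multiset.mem_map.mp hmem
      exact hwi (by rw [← hte])
  have hcnt : ∀ w : ZMod 5 × ZMod v, (OOCDiffs B).count (g w) =
      (if w.1 = 0 then stmt19Ind ((↑u⁻¹ * w.2) ∈ ({0, α, -α} : Set (ZMod v))) else 0)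
      + (if w.1 = 1 then stmt19Ind (w.2 ∈ ({0, α, -α} : Set (ZMod v))) else 0)
      + (if w.1 = 4 then stmt19Ind (w.2 ∈ ({0, α, -α} : Set (ZMod v))) else 0)
      + (if w.1 = 2 then stmt19Ind (w.2 ∈ ({0, β, -β} : Set (ZMod v))) else 0)
      + (if w.1 = 3 then stmt19Ind (w.2 ∈ ({0, β, -β} : Set (ZMod v))) else 0) := by
    intro w
    rw [hOD, Multiset.count_map_eq_count' g _ hginj w, Multiset.count_add,
      Multiset.count_add, Multiset.count_add, Multiset.count_add,
      piece0 w, piece L1 1 _ hL1 w, piece L1 4 _ hL1 w, piece L2 2 _ hL2 w,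
      piece L2 3 _ hL2 w]
  have h5cases : ∀ d : ZMod 5, d = 0 ∨ d = 1 ∨ d = 2 ∨ d = 3 ∨ d = 4 := by decide
  have hgsurj : ∀ z : ZMod (5 * v), z = g (ce z) := by
    intro z
    show z = ce.symm (ce z)
    rw [RingEquiv.symm_apply_apply]
  have hnodup : (OOCDiffs B).Nodup := by
    rw [Multiset.nodup_iff_count_le_one]
    intro z
    rw [hgsurj z, hcnt (ce z)]
    have b1 := stmt19Ind_le_one ((↑u⁻¹ * (ce z).2) ∈ ({0, α, -α} : Set (ZMod v)))
    have b2 := stmt19Ind_le_one ((ce z).2 ∈ ({0, α, -α} : Set (ZMod v)))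
    have b3 := stmt19Ind_le_one ((ce z).2 ∈ ({0, β, -β} : Set (ZMod v)))
    rcases h5cases (ce z).1 with hd | hd | hd | hd | hd <;> rw [hd]
    · rw [if_pos rfl, if_neg (show ¬((0:ZMod 5) = 1) by decide),
        if_neg (show ¬((0:ZMod 5) = 4) by decide), if_neg (show ¬((0:ZMod 5) = 2) by decide),
        if_neg (show ¬((0:ZMod 5) = 3) by decide)]
      omega
    · rw [if_neg (show ¬((1:ZMod 5) = 0) by decide), if_pos rfl,
        if_neg (show ¬((1:ZMod 5) = 4) by decide), if_neg (show ¬((1:ZMod 5) = 2) by decide),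
        if_neg (show ¬((1:ZMod 5) = 3) by decide)]
      omega
    · rw [if_neg (show ¬((2:ZMod 5) = 0) by decide),
        if_neg (show ¬((2:ZMod 5) = 1) by decide), if_neg (show ¬((2:ZMod 5) = 4) by decide),
        if_pos rfl, if_neg (show ¬((2:ZMod 5) = 3) by decide)]
      omega
    · rw [if_neg (show ¬((3:ZMod 5) = 0) by decide),
        if_neg (show ¬((3:ZMod 5) = 1) by decide), if_neg (show ¬((3:ZMod 5) = 4) by decide),
        if_neg (show ¬((3:ZMod 5) = 2) by decide), if_pos rfl]
      omega
    · rw [if_neg (show ¬((4:ZMod 5) = 0) by decide),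
        if_neg (show ¬((4:ZMod 5) = 1) by decide), if_pos rfl,
        if_neg (show ¬((4:ZMod 5) = 2) by decide), if_neg (show ¬((4:ZMod 5) = 3) by decide)]
      omega
  set T : Finset (ZMod 5 × ZMod v) :=
    ((({(0:ZMod 5)} : Finset (ZMod 5)) ×ˢ ({0, 2*α, 2*(-α)} : Finset (ZMod v)))
      ∪ (({1, 4} : Finset (ZMod 5)) ×ˢ ({0, α, -α} : Finset (ZMod v)))
      ∪ (({2, 3} : Finset (ZMod 5)) ×ˢ ({0, β, -β} : Finset (ZMod v)))) with hTdef
  have hleave : OOCLeave B ⊆ ↑(T.image g) := by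
    intro z hz
    have hz0 : (OOCDiffs B).count z = 0 := Multiset.count_eq_zero.mpr hz
    rw [hgsurj z, hcnt (ce z)] at hz0
    refine Finset.mem_coe.mpr (Finset.mem_image.mpr ⟨ce z, ?_, (hgsurj z).symm⟩)
    rw [hTdef]
    rcases h5cases (ce z).1 with hd | hd | hd | hd | hd <;> rw [hd] at hz0
    · rw [if_pos rfl, if_neg (show ¬((0:ZMod 5) = 1) by decide),
        if_neg (show ¬((0:ZMod 5) = 4) by decide), if_neg (show ¬((0:ZMod 5) = 2) by decide),
        if_neg (show ¬((0:ZMod 5) = 3) by decide)] at hz0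
      have hmem : (↑u⁻¹ * (ce z).2) ∈ ({0, α, -α} : Set (ZMod v)) :=
        stmt19Ind_of_eq_zero (by omega)
      refine Finset.mem_union_left _ (Finset.mem_union_left _ ?_)
      rw [Finset.mem_product]
      refine ⟨by simp [hd], ?_⟩
      have h2w : (ce z).2 = 2 * (↑u⁻¹ * (ce z).2) := (hcancel2 _).symm
      simp only [Finset.mem_insert, Finset.mem_singleton]
      rcases hmem with hm | hm | hm
      · left
        rw [h2w, hm, mul_zero]
      · right; left
        rw [h2w, hm]
      · right; right
        rw [h2w, hm]
    · rw [if_neg (show ¬((1:ZMod 5) = 0) by decide), if_pos rfl,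
        if_neg (show ¬((1:ZMod 5) = 4) by decide), if_neg (show ¬((1:ZMod 5) = 2) by decide),
        if_neg (show ¬((1:ZMod 5) = 3) by decide)] at hz0
      have hmem : (ce z).2 ∈ ({0, α, -α} : Set (ZMod v)) := stmt19Ind_of_eq_zero (by omega)
      refine Finset.mem_union_left _ (Finset.mem_union_right _ ?_)
      rw [Finset.mem_product]
      refine ⟨by simp [hd], ?_⟩
      simpa using hmem
    · rw [if_neg (show ¬((2:ZMod 5) = 0) by decide),
        if_neg (show ¬((2:ZMod 5) = 1) by decide), if_neg (show ¬((2:ZMod 5) = 4) by decide),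
        if_pos rfl, if_neg (show ¬((2:ZMod 5) = 3) by decide)] at hz0
      have hmem : (ce z).2 ∈ ({0, β, -β} : Set (ZMod v)) := stmt19Ind_of_eq_zero (by omega)
      refine Finset.mem_union_right _ ?_
      rw [Finset.mem_product]
      refine ⟨by simp [hd], ?_⟩
      simpa using hmem
    · rw [if_neg (show ¬((3:ZMod 5) = 0) by decide),
        if_neg (show ¬((3:ZMod 5) = 1) by decide), if_neg (show ¬((3:ZMod 5) = 4) by decide),
        if_neg (show ¬((3:ZMod 5) = 2) by decide), if_pos rfl] at hz0
      have hmem : (ce z).2 ∈ ({0, β, -β} : Set (ZMod v)) := stmt19Ind_of_eq_zero (by omega)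
      refine Finset.mem_union_right _ ?_
      rw [Finset.mem_product]
      refine ⟨by simp [hd], ?_⟩
      simpa using hmem
    · rw [if_neg (show ¬((4:ZMod 5) = 0) by decide),
        if_neg (show ¬((4:ZMod 5) = 1) by decide), if_pos rfl,
        if_neg (show ¬((4:ZMod 5) = 2) by decide),
        if_neg (show ¬((4:ZMod 5) = 3) by decide)] at hz0
      have hmem : (ce z).2 ∈ ({0, α, -α} : Set (ZMod v)) := stmt19Ind_of_eq_zero (by omega)
      refine Finset.mem_union_left _ (Finset.mem_union_right _ ?_)
      rw [Finset.mem_product]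
      refine ⟨by simp [hd], ?_⟩
      simpa using hmem
  have hTcard : T.card ≤ 15 := by
    have hc3 : ∀ (a b c : ZMod v), ({a, b, c} : Finset (ZMod v)).card ≤ 3 := by
      intro a b c
      have h1 := Finset.card_insert_le a ({b, c} : Finset (ZMod v))
      have h2 := Finset.card_insert_le b ({c} : Finset (ZMod v))
      have h3 : ({c} : Finset (ZMod v)).card = 1 := Finset.card_singleton c
      omega
    have hc2 : ∀ (a b : ZMod 5), ({a, b} : Finset (ZMod 5)).card ≤ 2 := by
      intro a b
      have h1 := Finset.card_insert_le a ({b} : Finset (ZMod 5))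
      have h2 : ({b} : Finset (ZMod 5)).card = 1 := Finset.card_singleton b
      omega
    rw [hTdef]
    have hu1 := Finset.card_union_le
      ((({(0:ZMod 5)} : Finset (ZMod 5)) ×ˢ ({0, 2*α, 2*(-α)} : Finset (ZMod v)))
        ∪ (({1, 4} : Finset (ZMod 5)) ×ˢ ({0, α, -α} : Finset (ZMod v))))
      ((({2, 3} : Finset (ZMod 5)) ×ˢ ({0, β, -β} : Finset (ZMod v))))
    have hu2 := Finset.card_union_le
      ((({(0:ZMod 5)} : Finset (ZMod 5)) ×ˢ ({0, 2*α, 2*(-α)} : Finset (ZMod v))))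
      ((({1, 4} : Finset (ZMod 5)) ×ˢ ({0, α, -α} : Finset (ZMod v))))
    have hp1 : ((({(0:ZMod 5)} : Finset (ZMod 5))
        ×ˢ ({0, 2*α, 2*(-α)} : Finset (ZMod v)))).card ≤ 3 := by
      rw [Finset.card_product]
      have := hc3 (0 : ZMod v) (2*α) (2*(-α))
      simp only [Finset.card_singleton]
      omega
    have hp2 : ((({1, 4} : Finset (ZMod 5)) ×ˢ ({0, α, -α} : Finset (ZMod v)))).card ≤ 6 := by
      rw [Finset.card_product]
      have h1 := hc2 1 4
      have h2 := hc3 (0 : ZMod v) α (-α)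
      exact le_trans (Nat.mul_le_mul h1 h2) (by norm_num)
    have hp3 : ((({2, 3} : Finset (ZMod 5)) ×ˢ ({0, β, -β} : Finset (ZMod v)))).card ≤ 6 := by
      rw [Finset.card_product]
      have h1 := hc2 2 3
      have h2 := hc3 (0 : ZMod v) β (-β)
      exact le_trans (Nat.mul_le_mul h1 h2) (by norm_num)
    omega
  refine ⟨B, ⟨⟨?_, hnodup⟩, ?_⟩⟩
  · intro b hb
    obtain ⟨p, hp, rfl⟩ := Finset.mem_image.mp hb
    exact hcard p hp
  · have h1 : (OOCLeave B).ncard ≤ (T.image g).card := by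
      have := Set.ncard_le_ncard hleave (Finset.finite_toSet _)
      rwa [Set.ncard_coe_finset] at this
    have h2 : (T.image g).card ≤ T.card := Finset.card_image_le
    norm_num
    omega
end
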